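/- arXiv:2411.10572 — 2 statements merged into one kernel-verified Lean document; each statement's English description precedes it below -/
import Mathlib

section
/- Let c, d, t be integers with cd ≠ 0, t(t^2 - 4d) = c^2, and x^4 + cx + d irreducible over ℚ. Then neither t nor t^2 - 4d is a perfect square in ℤ. -/
/-!
If `t = s ^ 2`, then `s ^ 2 (t ^ 2 - 4 d) = c ^ 2` forces `c = s u` with `u ^ 2 = s ^ 4 - 4 d`;
symmetrically, if `t ^ 2 - 4 d = u ^ 2`, then `u ^ 2 t = c ^ 2` forces `c = u s` with `t = s ^ 2`.
Either way `x ^ 4 + c x + d = (x ^ 2 + s x + β) (x ^ 2 - s x + γ)` with `β, γ = (s ^ 2 ∓ u) / 2`,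
contradicting irreducibility.
-/

open Polynomial

theorem X_pow_four_add_C_mul_X_add_C_eq_mul {R : Type*} [CommRing R] {c d s β γ : R}
    (hc : c = s * (γ - β)) (hd : d = β * γ) (hsum : β + γ = s ^ 2) :
    X ^ 4 + C c * X + C d = (X ^ 2 + C s * X + C β) * (X ^ 2 - C s * X + C γ) := by
  have hsum' : C β + C γ = C s ^ 2 := by rw [← C_add, ← C_pow, hsum]
  rw [hc, hd, C_mul, C_sub, C_mul]
  linear_combination -X ^ 2 * hsum'

theorem not_irreducible_X_pow_four_add_C_mul_X_add_C {K : Type*} [Field K] [NeZero (2 : K)]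
    {c d s u : K} (hc : c = s * u) (hu : u ^ 2 = s ^ 4 - 4 * d) :
    ¬ Irreducible (X ^ 4 + C c * X + C d) := by
  intro hirr
  have hfactor := X_pow_four_add_C_mul_X_add_C_eq_mul (c := c) (d := d) (s := s)
    (β := (s ^ 2 - u) / 2) (γ := (s ^ 2 + u) / 2)
    (by rw [hc]; field_simp; ring) (by field_simp; linear_combination hu) (by field_simp; ring)
  rcases hirr.isUnit_or_isUnit hfactor with hunit | hunit
  · have : (X ^ 2 + C s * X + C ((s ^ 2 - u) / 2)).natDegree = 2 := by compute_degree!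
    simp [natDegree_eq_zero_of_isUnit hunit] at this
  · have : (X ^ 2 - C s * X + C ((s ^ 2 + u) / 2)).natDegree = 2 := by compute_degree!
    simp [natDegree_eq_zero_of_isUnit hunit] at this

theorem exists_eq_mul_of_sq_mul_eq_sq {R : Type*} [CommRing R] [IsDomain R]
    [IsIntegrallyClosed R] {a b c : R} (ha : a ≠ 0) (h : a ^ 2 * b = c ^ 2) :
    ∃ u, c = a * u ∧ b = u ^ 2 := by
  obtain ⟨u, rfl⟩ : a ∣ c := (IsIntegrallyClosed.pow_dvd_pow_iff two_ne_zero).1 ⟨b, h.symm⟩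
  exact ⟨u, rfl, mul_left_cancel₀ (pow_ne_zero 2 ha) (by linear_combination h)⟩

/-- If `x^4 + c x + d` is irreducible over `ℚ`, `c d ≠ 0` and `t (t^2 - 4 d) = c^2`,
then neither `t` nor `t^2 - 4 d` is a perfect square. -/
theorem not_square_of_irreducible (c d t : ℤ) (hcd : c * d ≠ 0)
    (ht : t * (t ^ 2 - 4 * d) = c ^ 2)
    (hirr : Irreducible ((X ^ 4 + C c * X + C d : Polynomial ℤ).map (algebraMap ℤ ℚ))) :
    ¬ IsSquare t ∧ ¬ IsSquare (t ^ 2 - 4 * d) := by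
  have hc : c ≠ 0 := left_ne_zero_of_mul hcd
  have hirrℚ : Irreducible (X ^ 4 + C (c : ℚ) * X + C (d : ℚ)) := by simpa using hirr
  have not_factor (s u : ℤ) (hcsu : c = s * u) (hu : u ^ 2 = s ^ 4 - 4 * d) : False :=
    not_irreducible_X_pow_four_add_C_mul_X_add_C (s := (s : ℚ)) (u := u)
      (by exact_mod_cast hcsu) (by exact_mod_cast hu) hirrℚ
  constructor
  · rintro ⟨s, rfl⟩
    have hs : s ≠ 0 := by
      rintro rfl
      exact hc (pow_eq_zero_iff two_ne_zero |>.1 (by simpa using ht.symm))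
    obtain ⟨u, hcsu, hu⟩ :=
      exists_eq_mul_of_sq_mul_eq_sq (b := (s * s) ^ 2 - 4 * d) (c := c) hs
        (by linear_combination ht)
    exact not_factor s u hcsu (by linear_combination -hu)
  · rintro ⟨u, hu⟩
    have hu0 : u ≠ 0 := by
      rintro rfl
      exact hc (pow_eq_zero_iff two_ne_zero |>.1 (by simpa [hu] using ht.symm))
    obtain ⟨s, hcus, rfl⟩ :=
      exists_eq_mul_of_sq_mul_eq_sq (b := t) (c := c) hu0 (by linear_combination ht - t * hu)
    exact not_factor s u (by rw [hcus, mul_comm]) (by linear_combination -hu)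
end

section
/- Let f(x) = x^4 + cx + d ∈ ℤ[x] be monogenic with cyclic Galois group, and let t be the integer root of the resolvent cubic x^3 - 4dx - c^2. Then for every prime q ≥ 5 dividing 3t^2 - 4d, q exactly divides 3t^2 - 4d and q exactly divides 16d - 3t^2 (i.e., q² divides neither). -/
/-!
For a root `θ` of a monic `f ∈ ℤ[X]`, write `f = f(a) + (X - a) Q`. If `p² ∣ f(a)` and
`p ∣ f'(a) = Q(a)`, then `Q(θ) / p` is a root of a monic quadratic over `ℤ[θ]`, hence integral,
but it is not in `ℤ[θ]` because `Q` is monic of degree `deg f - 1`. So for monogenic `f` no such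
`a` exists unless `p` is a unit.

For `f = X⁴ + cX + d` and a prime `q ∣ 3t² - 4d`: if `q ∤ t` then `q ∤ c`, and `a ≡ -t²/c`
modulo `q²` gives `c⁴ f(a) ≡ d t² (3t² - 4d)² ≡ 0 (mod q²)` and
`c³ f'(a) ≡ -t² (t² + 4d) (3t² - 4d) ≡ 0 (mod q)`, which is impossible. Hence `q ∣ t`, so `q ∣ c`
and `q ∣ d`; taking `a = 0` shows `q² ∤ d`, and as `q² ∣ 3t²` both exactness claims follow.
-/

open Polynomial

/-- A polynomial `f ∈ ℤ[x]` is monogenic if it is monic, irreducible over `ℚ`, and for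
every number field `K` containing a root `θ` of `f`, the ring of integers of `K` is
`ℤ[θ]`. -/
def IsMonogenic (f : Polynomial ℤ) : Prop :=
  f.Monic ∧ Irreducible (f.map (algebraMap ℤ ℚ)) ∧
    ∀ (K : Type) [Field K] [Algebra ℚ K] [FiniteDimensional ℚ K] (θ : K),
      Polynomial.aeval θ f = 0 →
        Algebra.adjoin ℤ ({θ} : Set K) = integralClosure ℤ K

/-- The Galois group of `x^4 + c x + d` over `ℚ`. -/
abbrev quarticGal (c d : ℤ) : Type :=
  ((X ^ 4 + C (c : ℚ) * X + C (d : ℚ)).SplittingField ≃ₐ[ℚ]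
    (X ^ 4 + C (c : ℚ) * X + C (d : ℚ)).SplittingField)

namespace Polynomial

theorem eval_divByMonic_X_sub_C_self {R : Type*} [CommRing R] (f : R[X]) (a : R) :
    (f /ₘ (X - C a)).eval a = f.derivative.eval a := by
  simpa using
    congrArg (eval a) (divByMonic_add_X_sub_C_mul_derivative_divByMonic_eq_derivative f a)

theorem Monic.divByMonic_X_sub_C {R : Type*} [CommRing R] [Nontrivial R] {f : R[X]}
    (hf : f.Monic) (hdeg : 0 < f.natDegree) (a : R) : (f /ₘ (X - C a)).Monic := by
  refine (monic_X_sub_C a).of_mul_monic_left ?_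
  rw [X_sub_C_mul_divByMonic_eq_sub_modByMonic, modByMonic_X_sub_C_eq_C_eval]
  refine hf.sub_of_left (degree_C_le.trans_lt ?_)
  rwa [degree_eq_natDegree hf.ne_zero, Nat.cast_pos]

end Polynomial

section IntegralityCriterion

variable {K : Type*} [Field K] [CharZero K]

theorem isIntegral_aeval_divByMonic_div {f : ℤ[X]} {θ : K} (hθ : aeval θ f = 0)
    (hθi : IsIntegral ℤ θ) {p a : ℤ} (hp : p ≠ 0) (h2 : p ^ 2 ∣ f.eval a)
    (h1 : p ∣ f.derivative.eval a) : IsIntegral ℤ (aeval θ (f /ₘ (X - C a)) / p) := by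
  obtain ⟨D, hD⟩ := h2
  obtain ⟨B, hB⟩ := h1
  set Q := f /ₘ (X - C a)
  obtain ⟨H, hH⟩ := X_sub_C_dvd_sub_C_eval (p := Q) (a := a)
  rw [eval_divByMonic_X_sub_C_self, hB] at hH
  have hdecomp : C (f.eval a) + (X - C a) * Q = f := by
    rw [← modByMonic_X_sub_C_eq_C_eval]; exact modByMonic_add_div f _
  have hfθ := congrArg (aeval θ) hdecomp
  have hQθ := congrArg (aeval θ) hH
  simp only [map_add, map_sub, map_mul, aeval_X, eq_intCast, map_intCast, hθ, hD] at hfθ hQθ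
  -- `β = Q(θ) / p` satisfies `β² - Bβ = -D H(θ)`, where `Q = p B + (X - a) H` and `f(a) = p² D`.
  have hβ : aeval (aeval θ Q / p) (X * (X - C B)) = -(D * aeval θ H) := by
    simp only [map_sub, map_mul, aeval_X, eq_intCast, map_intCast]
    field_simp
    push_cast at hfθ hQθ
    linear_combination (aeval θ H) * hfθ + (aeval θ Q) * hQθ
  refine .of_aeval_monic (monic_X.mul (monic_X_sub_C B)) ?_ ?_
  · rw [natDegree_mul X_ne_zero (X_sub_C_ne_zero B)]; simp
  rw [hβ]
  exact ((isIntegral_algebraMap (x := D)).mul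
    (adjoin_le_integralClosure hθi (aeval_mem_adjoin_singleton ℤ θ))).neg

theorem isUnit_of_aeval_div_mem_adjoin {θ : K} (hθi : IsIntegral ℤ θ) {Q : ℤ[X]} (hQ : Q.Monic)
    (hdeg : Q.natDegree < (minpoly ℤ θ).natDegree) {p : ℤ} (hp : p ≠ 0)
    (hmem : aeval θ Q / p ∈ Algebra.adjoin ℤ {θ}) : IsUnit p := by
  rw [Algebra.adjoin_singleton_eq_range_aeval] at hmem
  obtain ⟨g, hg⟩ := hmem
  set r := g %ₘ minpoly ℤ θ
  have hr : aeval θ r = aeval θ Q / p := by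
    rw [aeval_modByMonic_eq_self_of_root (minpoly.aeval ℤ θ)]; exact hg
  have hG : C p * r - Q = 0 := by
    by_contra hne
    refine (minpoly.IsIntegrallyClosed.degree_le_of_ne_zero (s := θ) hne ?_).not_gt ?_
    · rw [map_sub, map_mul, aeval_C, hr, algebraMap_int_eq, eq_intCast,
        mul_div_cancel₀ _ (Int.cast_ne_zero.2 hp), sub_self]
    refine (degree_sub_le _ _).trans_lt (max_lt ?_ (degree_lt_degree hdeg))
    rw [degree_C_mul hp]
    exact degree_modByMonic_lt g (minpoly.monic hθi)
  have := congrArg (coeff · Q.natDegree) hG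
  simp only [coeff_sub, coeff_C_mul, hQ.coeff_natDegree, coeff_zero, sub_eq_zero] at this
  exact .of_mul_eq_one _ this

theorem isUnit_of_sq_dvd_eval_minpoly {θ : K}
    (hθi : IsIntegral ℤ θ) (hadj : Algebra.adjoin ℤ {θ} = integralClosure ℤ K) {p a : ℤ}
    (hp : p ≠ 0) (h2 : p ^ 2 ∣ (minpoly ℤ θ).eval a) (h1 : p ∣ (minpoly ℤ θ).derivative.eval a) :
    IsUnit p := by
  have hdeg := minpoly.natDegree_pos hθi
  refine isUnit_of_aeval_div_mem_adjoin hθi ((minpoly.monic hθi).divByMonic_X_sub_C hdeg a) ?_ hp ?_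
  · rw [natDegree_divByMonic _ (monic_X_sub_C a), natDegree_X_sub_C]; omega
  · rw [hadj]; exact isIntegral_aeval_divByMonic_div (minpoly.aeval ℤ θ) hθi hp h2 h1

end IntegralityCriterion

theorem minpoly_int_eq_of_irreducible_map {K : Type*} [Field K] [Algebra ℚ K] {f : ℤ[X]}
    (hf : f.Monic) (hirr : Irreducible (f.map (algebraMap ℤ ℚ))) {θ : K} (hθ : aeval θ f = 0) :
    minpoly ℤ θ = f := by
  have hθi : IsIntegral ℤ θ := ⟨f, hf, hθ⟩
  apply map_injective (algebraMap ℤ ℚ) (RingHom.injective_int _)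
  rw [← minpoly.isIntegrallyClosed_eq_field_fractions' ℚ hθi]
  exact (minpoly.eq_of_irreducible_of_monic hirr (by rwa [aeval_map_algebraMap]) (hf.map _)).symm

theorem IsMonogenic.isUnit_of_sq_dvd_eval {f : ℤ[X]} (hf : IsMonogenic f) {p a : ℤ} (hp : p ≠ 0)
    (h2 : p ^ 2 ∣ f.eval a) (h1 : p ∣ f.derivative.eval a) : IsUnit p := by
  obtain ⟨hmonic, hirr, hadj⟩ := hf
  obtain ⟨K, _, _, _, θ, hθ⟩ : ∃ (K : Type) (_ : Field K) (_ : Algebra ℚ K)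
      (_ : FiniteDimensional ℚ K) (θ : K), aeval θ f = 0 := by
    have : Fact (Irreducible (f.map (algebraMap ℤ ℚ))) := ⟨hirr⟩
    refine ⟨_, inferInstance, inferInstance, (hmonic.map _).finite_adjoinRoot,
      AdjoinRoot.root (f.map (algebraMap ℤ ℚ)), ?_⟩
    rw [← aeval_map_algebraMap ℚ]; exact AdjoinRoot.eval₂_root _
  have : CharZero K := charZero_of_injective_algebraMap (algebraMap ℚ K).injective
  have hmin := minpoly_int_eq_of_irreducible_map hmonic hirr hθ
  exact isUnit_of_sq_dvd_eval_minpoly ⟨f, hmonic, hθ⟩ (hadj K θ hθ) hp (hmin ▸ h2) (hmin ▸ h1)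

section Resolvent

variable {R : Type*} [CommRing R] {n c d t a : R}

theorem dvd_mul_quartic_eval_sub (hroot : t ^ 3 - 4 * d * t - c ^ 2 = 0) (ha : n ∣ c * a + t ^ 2) :
    n ∣ c ^ 4 * (a ^ 4 + c * a + d) - d * t ^ 2 * (3 * t ^ 2 - 4 * d) ^ 2 := by
  obtain ⟨e, he⟩ := ha
  exact ⟨e * ((c * a) ^ 3 - (c * a) ^ 2 * t ^ 2 + c * a * t ^ 4 - t ^ 6 + c ^ 4),
    by linear_combination ((c * a) ^ 3 - (c * a) ^ 2 * t ^ 2 + c * a * t ^ 4 - t ^ 6 + c ^ 4) * he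
      + (t ^ 2 - d) * (t ^ 3 - 4 * d * t + c ^ 2) * hroot⟩

theorem dvd_mul_quartic_derivative_add (hroot : t ^ 3 - 4 * d * t - c ^ 2 = 0)
    (ha : n ∣ c * a + t ^ 2) :
    n ∣ c ^ 3 * (4 * a ^ 3 + c) + t ^ 2 * (t ^ 2 + 4 * d) * (3 * t ^ 2 - 4 * d) := by
  obtain ⟨e, he⟩ := ha
  exact ⟨4 * e * ((c * a) ^ 2 - c * a * t ^ 2 + t ^ 4),
    by linear_combination 4 * ((c * a) ^ 2 - c * a * t ^ 2 + t ^ 4) * he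
      - (t ^ 3 - 4 * d * t + c ^ 2) * hroot⟩

end Resolvent

section Divisibility

variable {c d t q : ℤ}

theorem exists_sq_dvd_quartic_eval (hroot : t ^ 3 - 4 * d * t - c ^ 2 = 0) (hq : Prime q)
    (hq2 : ¬ q ∣ 2) (hdvd : q ∣ 3 * t ^ 2 - 4 * d) (ht : ¬ q ∣ t) :
    ∃ a, q ^ 2 ∣ a ^ 4 + c * a + d ∧ q ∣ 4 * a ^ 3 + c := by
  have hc : IsCoprime q c := by
    refine (Prime.coprime_iff_not_dvd hq).2 fun hc ↦ ?_
    have h2t : q ∣ 2 * t ^ 3 := by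
      rw [show 2 * t ^ 3 = t * (3 * t ^ 2 - 4 * d) - c * c by linear_combination -hroot]
      exact dvd_sub (dvd_mul_of_dvd_right hdvd t) (dvd_mul_of_dvd_left hc c)
    rcases hq.dvd_or_dvd h2t with h | h
    exacts [hq2 h, ht (hq.dvd_of_dvd_pow h)]
  obtain ⟨u, v, huv⟩ := hc.pow_left (m := 2)
  have ha : q ^ 2 ∣ c * (-t ^ 2 * v) + t ^ 2 := ⟨u * t ^ 2, by linear_combination -t ^ 2 * huv⟩
  have hsq : q ^ 2 ∣ (3 * t ^ 2 - 4 * d) ^ 2 := pow_dvd_pow_of_dvd hdvd 2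
  refine ⟨-t ^ 2 * v, (hc.pow (m := 2) (n := 4)).dvd_of_dvd_mul_left ?_,
    (hc.pow_right (n := 3)).dvd_of_dvd_mul_left ?_⟩
  · exact (dvd_sub_left (dvd_mul_of_dvd_right hsq _)).mp (dvd_mul_quartic_eval_sub hroot ha)
  · exact (dvd_add_left (dvd_mul_of_dvd_right hdvd _)).mp
      (dvd_mul_quartic_derivative_add hroot ((dvd_pow_self q two_ne_zero).trans ha))

theorem dvd_of_dvd_resolvent (hroot : t ^ 3 - 4 * d * t - c ^ 2 = 0) (hq : Prime q)
    (hq2 : IsCoprime q 2) (ht : q ∣ t) (hdvd : q ∣ 3 * t ^ 2 - 4 * d) : q ∣ c ∧ q ∣ d := by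
  have hd : q ∣ d := by
    refine hq2.pow_right (n := 2) |>.dvd_of_dvd_mul_left ?_
    rw [show 2 ^ 2 * d = 3 * t ^ 2 - (3 * t ^ 2 - 4 * d) by ring]
    exact dvd_sub (dvd_mul_of_dvd_right (dvd_pow ht two_ne_zero) 3) hdvd
  refine ⟨hq.dvd_of_dvd_pow (n := 2) ?_, hd⟩
  rw [show c ^ 2 = t * (t ^ 2 - 4 * d) by linear_combination -hroot]
  exact dvd_mul_of_dvd_left ht _

theorem exactly_dvd_of_dvd_of_not_sq_dvd (hq2 : IsCoprime q 2) (ht : q ∣ t) (hd : q ∣ d)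
    (hd2 : ¬ q ^ 2 ∣ d) :
    ¬ q ^ 2 ∣ 3 * t ^ 2 - 4 * d ∧ q ∣ 16 * d - 3 * t ^ 2 ∧ ¬ q ^ 2 ∣ 16 * d - 3 * t ^ 2 := by
  have htt : q ^ 2 ∣ 3 * t ^ 2 := dvd_mul_of_dvd_right (pow_dvd_pow_of_dvd ht 2) 3
  have hcancel (k : ℕ) (h : q ^ 2 ∣ 2 ^ k * d) : q ^ 2 ∣ d :=
    hq2.pow.dvd_of_dvd_mul_left h
  refine ⟨fun h ↦ hd2 (hcancel 2 ?_), ?_, fun h ↦ hd2 (hcancel 4 ?_)⟩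
  · rw [show 2 ^ 2 * d = 3 * t ^ 2 - (3 * t ^ 2 - 4 * d) by ring]
    exact dvd_sub htt h
  · exact dvd_sub (dvd_mul_of_dvd_right hd 16) (dvd_mul_of_dvd_right (dvd_pow ht two_ne_zero) 3)
  · rw [show 2 ^ 4 * d = 16 * d - 3 * t ^ 2 + 3 * t ^ 2 by ring]
    exact dvd_add h htt

end Divisibility

theorem prime_exactly_divides_general (c d t : ℤ)
    (hroot : t ^ 3 - 4 * d * t - c ^ 2 = 0)
    (hmono : IsMonogenic (X ^ 4 + C c * X + C d)) :
    ∀ q : ℕ, q.Prime → 5 ≤ q → (q : ℤ) ∣ 3 * t ^ 2 - 4 * d →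
      ¬ ((q : ℤ) ^ 2 ∣ 3 * t ^ 2 - 4 * d) ∧ (q : ℤ) ∣ 16 * d - 3 * t ^ 2 ∧
        ¬ ((q : ℤ) ^ 2 ∣ 16 * d - 3 * t ^ 2) := by
  intro q hq hq5 hdvd
  have hqZ : Prime (q : ℤ) := Nat.prime_iff_prime_int.mp hq
  have hq2 : ¬ (q : ℤ) ∣ 2 := fun h ↦ by have := Int.le_of_dvd two_pos h; omega
  have hindex (a : ℤ) (h2 : (q : ℤ) ^ 2 ∣ a ^ 4 + c * a + d) (h1 : (q : ℤ) ∣ 4 * a ^ 3 + c) :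
      False :=
    hqZ.not_isUnit (hmono.isUnit_of_sq_dvd_eval hqZ.ne_zero (by simpa using h2) (by simpa using h1))
  by_cases ht : (q : ℤ) ∣ t
  · have hq2' : IsCoprime (q : ℤ) 2 := (Prime.coprime_iff_not_dvd hqZ).2 hq2
    obtain ⟨hc, hd⟩ := dvd_of_dvd_resolvent hroot hqZ hq2' ht hdvd
    exact exactly_dvd_of_dvd_of_not_sq_dvd hq2' ht hd fun hd2 ↦
      hindex 0 (by simpa using hd2) (by simpa using hc)
  · obtain ⟨a, h2, h1⟩ := exists_sq_dvd_quartic_eval hroot hqZ hq2 hdvd ht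
    exact (hindex a h2 h1).elim

/-- If `x^4 + c x + d` is monogenic with cyclic Galois group `C₄` and `t` is the
integer root of its resolvent cubic, then every prime `q ≥ 5` dividing `3 t^2 - 4 d`
exactly divides both `3 t^2 - 4 d` and `16 d - 3 t^2`. -/
theorem prime_exactly_divides (c d t : ℤ) (hc : c ≠ 0) (hd : d ≠ 0)
    (hroot : t ^ 3 - 4 * d * t - c ^ 2 = 0)
    (hmono : IsMonogenic (X ^ 4 + C c * X + C d))
    (hcyc : IsCyclic (quarticGal c d)) (hcard : Nat.card (quarticGal c d) = 4) :
    ∀ q : ℕ, q.Prime → 5 ≤ q → (q : ℤ) ∣ 3 * t ^ 2 - 4 * d →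
      ¬ ((q : ℤ) ^ 2 ∣ 3 * t ^ 2 - 4 * d) ∧ (q : ℤ) ∣ 16 * d - 3 * t ^ 2 ∧
        ¬ ((q : ℤ) ^ 2 ∣ 16 * d - 3 * t ^ 2) :=
  prime_exactly_divides_general c d t hroot hmono
end
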